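/- arXiv:math-ph/0511043 — 3 statements merged into one kernel-verified Lean document; each statement's English description precedes it below -/
import Mathlib

section
/- Consider the classical harmonic oscillator flow on ℝ² given by q̇ = p/m, ṗ = −mω²q with m, ω > 0, together with the linear system Ġ^{a} = (ω/m')·((n−a)G^{a+1} − m'ω·a·G^{a−1}) for a = 0,…,n (with G^{−1} = G^{n+1} = 0), where m' = mω. Writing G̃^a = (mω)^{n/2−a} G^a, the quantities G̃^a evolve by the ODE system dG̃^a/dt = ω((n−a)G̃^{a+1} − a·G̃^{a−1}). Then the constant assignment G̃^{a} = (1/2ⁿ)·a!/((a/2)!)·(n−a)!/(((n−a)/2)!) for a, n−a both even, and G̃^a = 0 otherwise, is a fixed point of this ODE system: (n−a)G̃^{a+1} − a·G̃^{a−1} = 0 for all 0 ≤ a ≤ n. -/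
/-- The coherent-state values `G̃^a = (1/2ⁿ)·a!/((a/2)!)·(n−a)!/(((n−a)/2)!)` (for `a`,
`n−a` even, zero otherwise) are a fixed point of the dimensionless harmonic oscillator
moment equations: `(n−a)·G̃^{a+1} − a·G̃^{a−1} = 0` for all `0 ≤ a ≤ n`. -/
theorem stmt_5 (n : ℕ) (hn : Even n)
    (G : ℕ → ℝ)
    (hG : ∀ a : ℕ, G a = if a ≤ n ∧ Even a ∧ Even (n - a)
      then ((Nat.factorial a : ℝ) / (Nat.factorial (a / 2) : ℝ)) *
           ((Nat.factorial (n - a) : ℝ) / (Nat.factorial ((n - a) / 2) : ℝ)) / 2 ^ n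
      else 0) :
    ∀ a : ℕ, a ≤ n → ((n : ℝ) - (a : ℝ)) * G (a + 1) - (a : ℝ) * G (a - 1) = 0 := by
  intro a ha
  rcases Nat.even_or_odd a with he | ho
  · -- a even: both neighbor values vanish (or a = 0)
    have h1 : G (a + 1) = 0 := by
      rw [hG]
      rw [if_neg]
      rintro ⟨-, h2, -⟩
      rw [Nat.even_iff] at he h2
      omega
    rcases Nat.eq_zero_or_pos a with h | h
    · subst h; simp [h1]
    · have h2 : G (a - 1) = 0 := by
        rw [hG]
        rw [if_neg]
        rintro ⟨-, h3, -⟩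
        rw [Nat.even_iff] at he h3
        omega
      simp [h1, h2]
  · -- a odd: the factorial identity
    obtain ⟨k, hk⟩ := ho
    obtain ⟨m, hm⟩ := hn
    subst hk hm
    have hkm : 2 * k + 1 ≤ m + m := ha
    obtain ⟨j, hj⟩ : ∃ j, m = k + 1 + j := ⟨m - k - 1, by omega⟩
    subst hj
    have hA : G (2 * k + 1 + 1) =
        ((Nat.factorial (2 * k + 2) : ℝ) / (Nat.factorial (k + 1) : ℝ)) *
          ((Nat.factorial (2 * j) : ℝ) / (Nat.factorial j : ℝ)) / 2 ^ (k + 1 + j + (k + 1 + j)) := by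
      rw [hG, if_pos, show 2 * k + 1 + 1 = 2 * k + 2 from rfl,
        show (2 * k + 2) / 2 = k + 1 from by omega,
        show k + 1 + j + (k + 1 + j) - (2 * k + 2) = 2 * j from by omega,
        show 2 * j / 2 = j from by omega]
      refine ⟨by omega, ⟨k + 1, by omega⟩, ?_⟩
      rw [Nat.even_iff]; omega
    have hB : G (2 * k + 1 - 1) =
        ((Nat.factorial (2 * k) : ℝ) / (Nat.factorial k : ℝ)) *
          ((Nat.factorial (2 * j + 2) : ℝ) / (Nat.factorial (j + 1) : ℝ)) / 2 ^ (k + 1 + j + (k + 1 + j)) := by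
      rw [hG, if_pos, show 2 * k + 1 - 1 = 2 * k from by omega,
        show (2 * k) / 2 = k from by omega,
        show k + 1 + j + (k + 1 + j) - (2 * k) = 2 * j + 2 from by omega,
        show (2 * j + 2) / 2 = j + 1 from by omega]
      refine ⟨by omega, ⟨k, by omega⟩, ?_⟩
      rw [Nat.even_iff]; omega
    rw [hA, hB]
    have e1 : Nat.factorial (2 * k + 2) = (2 * k + 2) * ((2 * k + 1) * Nat.factorial (2 * k)) := by
      rw [Nat.factorial_succ, Nat.factorial_succ]
    have e2 : Nat.factorial (2 * j + 2) = (2 * j + 2) * ((2 * j + 1) * Nat.factorial (2 * j)) := by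
      rw [Nat.factorial_succ, Nat.factorial_succ]
    have e3 : Nat.factorial (k + 1) = (k + 1) * Nat.factorial k := Nat.factorial_succ k
    have e4 : Nat.factorial (j + 1) = (j + 1) * Nat.factorial j := Nat.factorial_succ j
    rw [e1, e2, e3, e4]
    have fk : (Nat.factorial k : ℝ) ≠ 0 := Nat.cast_ne_zero.mpr (Nat.factorial_ne_zero k)
    have fj : (Nat.factorial j : ℝ) ≠ 0 := Nat.cast_ne_zero.mpr (Nat.factorial_ne_zero j)
    have h2 : (2 : ℝ) ^ (k + 1 + j + (k + 1 + j)) ≠ 0 := by positivity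
    push_cast
    field_simp
    ring
end

section
/- Let n be even, s : ℝ → ℝ a differentiable function with s(t) > −1, and suppose real-valued differentiable functions G₀^{a,n} (a = 0,…,n) and functions G₁^{a,n} satisfy (n−a)·G₁^{a+1,n} − a·(1+s)·G₁^{a−1,n} = (1/ω)·dG₀^{a,n}/dt for all a (with index-out-of-range terms zero). Then Σ_{a even} binom(n/2, a/2)·(1+s)^{(n−a)/2}·dG₀^{a,n}/dt = 0. -/
lemma even_sum_reindex (c : ℕ → ℝ) (m : ℕ) :
    ∑ a ∈ Finset.range (2*m+1), (if Even a then c a else 0)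
      = ∑ b ∈ Finset.range (m+1), c (2*b) := by
  induction m with
  | zero => simp
  | succ m ih =>
    have h1 : 2*(m+1)+1 = (2*m+1) + 1 + 1 := by ring
    rw [h1, Finset.sum_range_succ, Finset.sum_range_succ, ih]
    have ho : ¬ Even (2*m+1) := by simp [Nat.even_add_one]
    have he : Even (2*m+1+1) := by simp [Nat.even_add_one, ho]
    have h2 : 2*m+1+1 = 2*(m+1) := by ring
    simp [ho, he, h2, Finset.sum_range_succ]

/-- First-order adiabatic solvability condition: if
`(n−a)·G₁^{a+1,n} − a·(1+s)·G₁^{a−1,n} = (1/ω)·dG₀^{a,n}/dt` for all `a ≤ n`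
(index-out-of-range terms zero), then
`Σ_{a even} binom(n/2,a/2)·(1+s)^{(n−a)/2}·dG₀^{a,n}/dt = 0`. -/
theorem stmt_9 (n : ℕ) (hn : Even n) (ω : ℝ) (hω : 0 < ω)
    (s : ℝ → ℝ) (hs : Differentiable ℝ s) (hs1 : ∀ t, -1 < s t)
    (G0 G1 : ℕ → ℝ → ℝ)
    (hG0diff : ∀ a : ℕ, a ≤ n → Differentiable ℝ (G0 a))
    (hG1top : ∀ t : ℝ, G1 (n + 1) t = 0)
    (heq : ∀ a : ℕ, a ≤ n → ∀ t : ℝ,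
      ((n : ℝ) - (a : ℝ)) * G1 (a + 1) t - (a : ℝ) * (1 + s t) * G1 (a - 1) t
        = (1 / ω) * deriv (G0 a) t) :
    ∀ t : ℝ, ∑ a ∈ Finset.range (n + 1),
      (if Even a then (((n / 2).choose (a / 2) : ℕ) : ℝ) * (1 + s t) ^ ((n - a) / 2) *
        deriv (G0 a) t else 0) = 0 := by
  obtain ⟨m, hm⟩ := hn
  have h2m : n = 2*m := by omega
  subst h2m
  intro t
  rw [even_sum_reindex]
  set g : ℕ → ℝ := fun b =>
      ω * (m.choose b : ℝ) * (1 + s t) ^ (m - b) * (2*b) * (1 + s t) * G1 (2*b - 1) t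
    with hg
  have key : ∀ b ∈ Finset.range (m+1),
      (((2*m/2).choose (2*b/2) : ℕ) : ℝ) * (1 + s t) ^ ((2*m - 2*b)/2) * deriv (G0 (2*b)) t
        = g (b+1) - g b := by
    intro b hb
    rw [Finset.mem_range] at hb
    have hb' : b ≤ m := by omega
    have h1 : 2*m/2 = m := by omega
    have h2 : 2*b/2 = b := by omega
    have h3 : (2*m - 2*b)/2 = m - b := by omega
    rw [h1, h2, h3]
    have hd := heq (2*b) (by omega) t
    have hωne : ω ≠ 0 := ne_of_gt hω
    have hd' : deriv (G0 (2*b)) t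
        = ω * ((((2*m : ℕ) : ℝ) - ((2*b : ℕ) : ℝ)) * G1 (2*b+1) t
            - ((2*b : ℕ) : ℝ) * (1 + s t) * G1 (2*b-1) t) := by
      rw [hd]
      field_simp
    simp only [hg]
    have h4 : 2*(b+1) - 1 = 2*b+1 := by omega
    rw [h4, hd']
    rcases eq_or_lt_of_le hb' with hbm | hbm
    · subst hbm
      simp [Nat.choose_succ_self]
      push_cast
      ring
    · have hc : (m.choose (b+1) : ℝ) * ((b:ℝ)+1) = (m.choose b : ℝ) * ((m:ℝ) - (b:ℝ)) := by
        have h5 : ((m.choose (b+1) * (b+1) : ℕ) : ℝ) = ((m.choose b * (m - b) : ℕ) : ℝ) := by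
          exact_mod_cast congrArg (Nat.cast : ℕ → ℝ) (Nat.choose_succ_right_eq m b)
        push_cast [Nat.cast_sub hb'] at h5
        linarith [h5]
      have h6 : m - b = (m - (b+1)) + 1 := by omega
      rw [h6, pow_succ]
      push_cast
      linear_combination (-2 * ω * (1 + s t) ^ (m - (b+1)) * (1 + s t) * G1 (2*b+1) t) * hc
  rw [Finset.sum_congr rfl key, Finset.sum_range_sub g]
  simp [hg, Nat.choose_succ_self]
end

section
/- Let n be even, C a constant, s > −1, and define G₀^{0,n}(s) = C·(1+s)^{−n/4} and G₀^{a,n}(s) = binom(n/2, a/2)·binom(n,a)^{−1}·(1+s)^{a/2}·G₀^{0,n}(s) for even a, zero for odd a. Then Σ_{a even} binom(n/2, a/2)·(1+s)^{(n−a)/2}·(d/ds)G₀^{a,n}(s) = 0. -/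
/-- The choice `G₀^{0,n}(s) = C·(1+s)^{−n/4}`,
`G₀^{a,n}(s) = binom(n/2,a/2)·binom(n,a)⁻¹·(1+s)^{a/2}·G₀^{0,n}(s)` for even `a` (zero for
odd `a`) satisfies the first-order adiabaticity constraint
`Σ_{a even} binom(n/2,a/2)·(1+s)^{(n−a)/2}·(d/ds)G₀^{a,n}(s) = 0` for all `s > −1`. -/
theorem stmt_10 (n : ℕ) (hn : Even n) (C : ℝ)
    (G0 : ℕ → ℝ → ℝ)
    (hG0 : ∀ (a : ℕ) (s : ℝ), G0 a s = if Even a ∧ a ≤ n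
      then ((((n / 2).choose (a / 2) : ℕ) : ℝ) / ((n.choose a : ℕ) : ℝ)) *
           (1 + s) ^ ((a : ℝ) / 2) * (C * (1 + s) ^ (-(n : ℝ) / 4))
      else 0) :
    ∀ s : ℝ, -1 < s →
      ∑ a ∈ Finset.range (n + 1),
        (if Even a then (((n / 2).choose (a / 2) : ℕ) : ℝ) * (1 + s) ^ ((n - a) / 2) *
          deriv (G0 a) s else 0) = 0 := by
  intro s hs
  have hx : (0:ℝ) < 1 + s := by linarith
  obtain ⟨m, hm⟩ := hn
  have hm2 : n / 2 = m := by omega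
  -- closed form of each summand
  set T : ℕ → ℝ := fun a =>
    if Even a then (((n / 2).choose (a / 2) : ℕ) : ℝ) ^ 2 / ((n.choose a : ℕ) : ℝ) * C *
      ((a : ℝ) / 2 - (n : ℝ) / 4) * (1 + s) ^ ((n : ℝ) / 4 - 1) else 0 with hT
  have key : ∀ a ∈ Finset.range (n + 1),
      (if Even a then (((n / 2).choose (a / 2) : ℕ) : ℝ) * (1 + s) ^ ((n - a) / 2) *
        deriv (G0 a) s else 0) = T a := by
    intro a ha
    rw [Finset.mem_range] at ha
    have han : a ≤ n := by omega
    by_cases hea : Even a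
    · obtain ⟨k, hk⟩ := hea
      have hea : Even a := ⟨k, hk⟩
      have hk2 : a / 2 = k := by omega
      have hkm : k ≤ m := by omega
      rw [if_pos hea, hT]
      simp only [if_pos hea]
      set A : ℝ := (((n / 2).choose (a / 2) : ℕ) : ℝ) with hA
      set B : ℝ := ((n.choose a : ℕ) : ℝ) with hB
      set p : ℝ := (a : ℝ) / 2 with hp
      set q : ℝ := -(n : ℝ) / 4 with hq
      -- derivative computation
      have hbase : HasDerivAt (fun t : ℝ => 1 + t) 1 s := by
        simpa using (hasDerivAt_id s).const_add (1:ℝ)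
      have h1 : HasDerivAt (fun t : ℝ => (1 + t) ^ p) (p * (1 + s) ^ (p - 1)) s := by
        have := (Real.hasDerivAt_rpow_const (x := 1 + s) (p := p)
          (Or.inl hx.ne')).comp s hbase
        rw [mul_one] at this
        exact this
      have h2 : HasDerivAt (fun t : ℝ => (1 + t) ^ q) (q * (1 + s) ^ (q - 1)) s := by
        have := (Real.hasDerivAt_rpow_const (x := 1 + s) (p := q)
          (Or.inl hx.ne')).comp s hbase
        rw [mul_one] at this
        exact this
      have hfun : G0 a = fun t : ℝ => (A / B) * (1 + t) ^ p * (C * (1 + t) ^ q) := by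
        funext t
        rw [hG0, if_pos ⟨hea, han⟩]
      have hD : HasDerivAt (G0 a)
          ((A / B) * (p * (1 + s) ^ (p - 1)) * (C * (1 + s) ^ q) +
            (A / B) * (1 + s) ^ p * (C * (q * (1 + s) ^ (q - 1)))) s := by
        rw [hfun]
        exact (h1.const_mul (A / B)).mul (h2.const_mul C)
      rw [hD.deriv]
      -- natural power as rpow
      have hE : ((1 + s) ^ ((n - a) / 2) : ℝ) = (1 + s) ^ ((m : ℝ) - (k : ℝ)) := by
        rw [← Real.rpow_natCast]
        congr 1
        have : (n - a) / 2 = m - k := by omega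
        rw [this, Nat.cast_sub hkm]
      rw [hE]
      have e1 : (1 + s) ^ ((m : ℝ) - (k : ℝ)) * ((1 + s) ^ (p - 1) * (1 + s) ^ q)
          = (1 + s) ^ ((n : ℝ) / 4 - 1) := by
        rw [← Real.rpow_add hx, ← Real.rpow_add hx]
        congr 1
        rw [hp, hq, hk, hm]
        push_cast
        ring
      have e2 : (1 + s) ^ ((m : ℝ) - (k : ℝ)) * ((1 + s) ^ p * (1 + s) ^ (q - 1))
          = (1 + s) ^ ((n : ℝ) / 4 - 1) := by
        rw [← Real.rpow_add hx, ← Real.rpow_add hx]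
        congr 1
        rw [hp, hq, hk, hm]
        push_cast
        ring
      have hpq : p - (- q) = p + q := by ring
      calc A * (1 + s) ^ ((m : ℝ) - (k : ℝ)) *
            ((A / B) * (p * (1 + s) ^ (p - 1)) * (C * (1 + s) ^ q) +
              (A / B) * (1 + s) ^ p * (C * (q * (1 + s) ^ (q - 1))))
          = A * (A / B) * C * p * ((1 + s) ^ ((m : ℝ) - (k : ℝ)) *
              ((1 + s) ^ (p - 1) * (1 + s) ^ q)) +
            A * (A / B) * C * q * ((1 + s) ^ ((m : ℝ) - (k : ℝ)) *
              ((1 + s) ^ p * (1 + s) ^ (q - 1))) := by ring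
        _ = A ^ 2 / B * C * (p + q) * (1 + s) ^ ((n : ℝ) / 4 - 1) := by
            rw [e1, e2]; ring
        _ = A ^ 2 / B * C * ((a : ℝ) / 2 - (n : ℝ) / 4) * (1 + s) ^ ((n : ℝ) / 4 - 1) := by
            rw [hp, hq]; ring_nf
    · rw [if_neg hea, hT]; simp [hea]
  rw [Finset.sum_congr rfl key]
  refine Finset.sum_involution (fun a _ => n - a) ?_ ?_ ?_ ?_
  · -- f a + f (n - a) = 0
    intro a ha
    rw [Finset.mem_range] at ha
    have han : a ≤ n := by omega
    show T a + T (n - a) = 0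
    by_cases hea : Even a
    · obtain ⟨k, hk⟩ := hea
      have heb : Even (n - a) := ⟨m - k, by omega⟩
      have hkm : k ≤ m := by omega
      rw [hT]
      simp only []
      rw [if_pos (show Even a from ⟨k, hk⟩), if_pos heb]
      have c1 : (n - a) / 2 = m - k := by omega
      have c2 : a / 2 = k := by omega
      have c3 : (n / 2).choose ((n - a) / 2) = (n / 2).choose (a / 2) := by
        rw [c1, c2, hm2, Nat.choose_symm hkm]
      have c4 : n.choose (n - a) = n.choose a := Nat.choose_symm han
      rw [c3, c4]
      have c5 : ((n - a : ℕ) : ℝ) = (n : ℝ) - (a : ℝ) := Nat.cast_sub han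
      rw [c5]
      ring
    · have heb : ¬ Even (n - a) := by
        intro ⟨k, hk⟩
        exact hea ⟨m - k, by omega⟩
      rw [hT]
      simp [hea, heb]
  · -- fixed points have zero value
    intro a ha hfa
    rw [Finset.mem_range] at ha
    intro hcon
    have hna : n = a + a := by omega
    apply hfa
    show T a = 0
    rw [hT]
    by_cases hea : Even a
    · simp only [if_pos hea]
      have hz : ((a : ℝ) / 2 - (n : ℝ) / 4) = 0 := by
        rw [hna]; push_cast; ring
      rw [hz]; ring
    · simp [hea]
  · intro a ha
    rw [Finset.mem_range] at ha
    simp only [Finset.mem_range]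
    omega
  · intro a ha
    rw [Finset.mem_range] at ha
    show n - (n - a) = a
    omega
end
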